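/- Let $n\geq 3$ and let $L_S$ be the $n\times n$ matrix with diagonal 4, super/sub-diagonal $-1$, and corner entries $+1$ in positions $(1,n),(n,1)$. All eigenvalues $\beta_1,\dots,\beta_n$ of $L_S$ are positive and $\sum_{i=1}^{n}\frac{1}{\beta_i}=\frac{n}{2\sqrt{3}}\cdot\frac{(2+\sqrt{3})^{n}-(2-\sqrt{3})^{n}}{(2+\sqrt{3})^{n}+(2-\sqrt{3})^{n}+2}$. -/

import Mathlib

/-!
By Gershgorin's theorem every eigenvalue of `L_S` lies within `2` of the diagonal entry `4`, so
all eigenvalues are at least `2`. The sum of their reciprocals is `tr (L_S⁻¹)`, and the inverse is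
explicit. Let `U k = ((2 + √3) ^ k - (2 - √3) ^ k) / (2√3)`, so that
`U (k + 2) = 4 U (k + 1) - U k`. Then `L_S⁻¹` has entry
`(U (n - d) - U d) / ((2 + √3) ^ n + (2 - √3) ^ n + 2)` at distance `d = |i - j|`. The recurrence
checks this away from the corners. Because the entry changes sign under `d ↦ n - d`, the
`+1` corners behave like ordinary `-1` neighbours. The trace is `n` times the diagonal entry.
-/

/-- The matrix `L_S`: diagonal `4`, subdiagonal and superdiagonal `-1`,
corner entries `+1` at positions `(1,n)` and `(n,1)`. -/
noncomputable def LS (n : ℕ) : Matrix (Fin n) (Fin n) ℝ :=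
  Matrix.of fun i j =>
    if i = j then 4
    else if i.val + 1 = j.val ∨ j.val + 1 = i.val then -1
    else if (i.val = 0 ∧ j.val = n - 1) ∨ (i.val = n - 1 ∧ j.val = 0) then 1
    else 0

namespace Matrix.IsHermitian

variable {𝕜 ι : Type*} [RCLike 𝕜] [Fintype ι] [DecidableEq ι] {A : Matrix ι ι 𝕜}

theorem trace_cfc (hA : A.IsHermitian) (f : ℝ → ℝ) :
    (cfc f A).trace = ∑ i, (f (hA.eigenvalues i) : 𝕜) := by
  rw [hA.cfc_eq, IsHermitian.cfc, Unitary.conjStarAlgAut_apply, trace_mul_cycle,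
    Unitary.coe_star_mul_self, one_mul, trace_diagonal]
  rfl

theorem trace_inv (hA : A.IsHermitian) (h : IsUnit A) :
    A⁻¹.trace = ∑ i, ((hA.eigenvalues i)⁻¹ : 𝕜) := by
  rw [nonsing_inv_eq_ringInverse, ← cfc_ringInverse_id (R := ℝ) A h, hA.trace_cfc]
  simp

theorem exists_eigenvalues_mem_closedBall {A : Matrix ι ι ℝ} (hA : A.IsHermitian) (i : ι) :
    ∃ k, hA.eigenvalues i ∈ Metric.closedBall (A k k) (∑ j ∈ Finset.univ.erase k, ‖A k j‖) :=
  eigenvalue_mem_ball <| Module.End.hasEigenvalue_iff_mem_spectrum.2 <| by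
    rw [spectrum_toLin']
    exact hA.eigenvalues_mem_spectrum_real i

end Matrix.IsHermitian

theorem coe_finRotate_eq_ite {n : ℕ} (i : Fin n) :
    (finRotate n i : ℕ) = if (i : ℕ) + 1 = n then 0 else (i : ℕ) + 1 := by
  cases n with
  | zero => exact i.elim0
  | succ m => rw [coe_finRotate]; split_ifs <;> simp_all [Fin.ext_iff]

theorem coe_finRotate_symm_eq_ite {n : ℕ} (i : Fin n) :
    ((finRotate n).symm i : ℕ) = if (i : ℕ) = 0 then n - 1 else (i : ℕ) - 1 := by
  have h := coe_finRotate_eq_ite ((finRotate n).symm i)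
  rw [Equiv.apply_symm_apply] at h
  have := ((finRotate n).symm i).isLt
  split_ifs at h ⊢ <;> omega

section LS

open scoped Matrix

variable {n : ℕ}

theorem abs_LS_apply_le (hn : 3 ≤ n) {i j : Fin n} (hij : j ≠ i) :
    |LS n i j| ≤
      (if j = finRotate n i then 1 else 0) + (if j = (finRotate n).symm i then 1 else 0) := by
  obtain ⟨a, ha⟩ := i
  obtain ⟨b, hb⟩ := j
  simp only [ne_eq, Fin.ext_iff] at hij
  simp only [LS, Matrix.of_apply, Fin.ext_iff, coe_finRotate_eq_ite, coe_finRotate_symm_eq_ite]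
  split_ifs <;> first | omega | norm_num

theorem sum_norm_LS_erase_le (hn : 3 ≤ n) (i : Fin n) :
    ∑ j ∈ Finset.univ.erase i, ‖LS n i j‖ ≤ 2 :=
  calc ∑ j ∈ Finset.univ.erase i, ‖LS n i j‖
      ≤ ∑ j ∈ Finset.univ.erase i,
          ((if j = finRotate n i then 1 else 0) + (if j = (finRotate n).symm i then 1 else 0)) :=
        Finset.sum_le_sum fun _ hj => abs_LS_apply_le hn (Finset.ne_of_mem_erase hj)
    _ ≤ ∑ j,
          ((if j = finRotate n i then 1 else 0) + (if j = (finRotate n).symm i then 1 else 0)) :=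
        Finset.sum_le_sum_of_subset_of_nonneg (Finset.erase_subset _ _) fun _ _ _ => by positivity
    _ = 2 := by simp [Finset.sum_add_distrib]; norm_num

theorem two_le_eigenvalues_LS (hn : 3 ≤ n) (hL : (LS n).IsHermitian) (i : Fin n) :
    2 ≤ hL.eigenvalues i := by
  obtain ⟨k, hk⟩ := hL.exists_eigenvalues_mem_closedBall i
  rw [Metric.mem_closedBall, Real.dist_eq, show LS n k k = 4 by simp [LS]] at hk
  linarith [(abs_le.1 (hk.trans (sum_norm_LS_erase_le hn k))).1]

theorem LS_apply_mul (hn : 3 ≤ n) (x : ℤ → ℝ) (htop : x n = -x 0)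
    (hbot : x (-1) = -x (n - 1)) (i j : Fin n) :
    LS n i j * x j = (if j = i then 4 * x i else 0)
      - (if j = finRotate n i then x (i + 1) else 0)
      - (if j = (finRotate n).symm i then x (i - 1) else 0) := by
  obtain ⟨a, ha⟩ := i
  obtain ⟨b, hb⟩ := j
  simp only [LS, Matrix.of_apply, Fin.ext_iff, coe_finRotate_eq_ite, coe_finRotate_symm_eq_ite]
  split_ifs <;> first
    | omega
    | (simp; done)
    | (rw [show (b : ℤ) = a by omega]; ring)
    | (rw [show (b : ℤ) = a + 1 by omega]; ring)
    | (rw [show (b : ℤ) = a - 1 by omega]; ring)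
    | (rw [show (a : ℤ) + 1 = n by omega, htop, show (b : ℤ) = 0 by omega]; ring)
    | (rw [show (a : ℤ) - 1 = -1 by omega, hbot, show (b : ℤ) = n - 1 by omega]; ring)

/-- Extending `x` antiperiodically (`x (k + n) = -x k`) turns the `+1` corners of `L_S` into
ordinary `-1` neighbours, so every row acts as the same second difference. -/
theorem LS_mulVec_apply (hn : 3 ≤ n) (x : ℤ → ℝ) (htop : x n = -x 0)
    (hbot : x (-1) = -x (n - 1)) (i : Fin n) :
    (LS n *ᵥ fun k => x k) i = 4 * x i - x (i + 1) - x (i - 1) := by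
  simp only [Matrix.mulVec, dotProduct, LS_apply_mul hn x htop hbot, Finset.sum_sub_distrib,
    Finset.sum_ite_eq', Finset.mem_univ, if_true]

end LS

open Real

noncomputable def lucasU (k : ℕ) : ℝ := ((2 + √3) ^ k - (2 - √3) ^ k) / (2 * √3)

theorem lucasU_zero : lucasU 0 = 0 := by simp [lucasU]

theorem lucasU_one : lucasU 1 = 1 := by
  have : √3 ≠ 0 := by positivity
  simp only [lucasU, pow_one]
  field_simp
  ring

theorem lucasU_add_two (k : ℕ) : lucasU (k + 2) = 4 * lucasU (k + 1) - lucasU k := by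
  have h3 : √3 ^ 2 = 3 := Real.sq_sqrt (by norm_num)
  simp only [lucasU, pow_succ]
  linear_combination ((2 + √3) ^ k - (2 - √3) ^ k) / (2 * √3) * h3

theorem four_mul_lucasU_succ_sub (k : ℕ) :
    4 * lucasU (k + 1) - 2 * lucasU k = (2 + √3) ^ (k + 1) + (2 - √3) ^ (k + 1) := by
  have h3 : √3 ^ 2 = 3 := Real.sq_sqrt (by norm_num)
  have : √3 ≠ 0 := by positivity
  simp only [lucasU, pow_succ]
  field_simp
  linear_combination (-2) * ((2 + √3) ^ k - (2 - √3) ^ k) * h3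

noncomputable def lsInvEntry (n m : ℕ) : ℝ :=
  (lucasU (n - m) - lucasU m) / ((2 + √3) ^ n + (2 - √3) ^ n + 2)

section lsInvEntry

variable {n : ℕ}

theorem lsInvEntry_sub {m : ℕ} (h : m ≤ n) : lsInvEntry n (n - m) = -lsInvEntry n m := by
  rw [lsInvEntry, lsInvEntry, Nat.sub_sub_self h, ← neg_div, neg_sub]

theorem lsInvEntry_add_two {k : ℕ} (h : k + 2 ≤ n) :
    lsInvEntry n k + lsInvEntry n (k + 2) = 4 * lsInvEntry n (k + 1) := by
  obtain ⟨r, rfl⟩ : ∃ r, n = k + 2 + r := ⟨n - (k + 2), by omega⟩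
  simp only [lsInvEntry, show k + 2 + r - k = r + 2 by omega, show k + 2 + r - (k + 2) = r by omega,
    show k + 2 + r - (k + 1) = r + 1 by omega, lucasU_add_two]
  ring

theorem four_mul_lsInvEntry_zero_sub (hn : 1 ≤ n) :
    4 * lsInvEntry n 0 - 2 * lsInvEntry n 1 = 1 := by
  obtain ⟨k, rfl⟩ : ∃ k, n = k + 1 := ⟨n - 1, by omega⟩
  have hD : 0 < (2 + √3) ^ (k + 1) + (2 - √3) ^ (k + 1) + 2 := by
    have : √3 < 2 := by
      rw [Real.sqrt_lt' two_pos]; norm_num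
    have := pow_pos (show 0 < 2 - √3 by linarith) (k + 1)
    positivity
  rw [lsInvEntry, lsInvEntry, Nat.sub_zero, Nat.add_sub_cancel, lucasU_zero, lucasU_one,
    ← mul_div_assoc, ← mul_div_assoc, div_sub_div_same, div_eq_one_iff_eq hD.ne',
    ← four_mul_lucasU_succ_sub]
  ring

theorem lsInvEntry_second_diff (d : ℤ) (hd : d.natAbs < n) :
    4 * lsInvEntry n d.natAbs - lsInvEntry n (d + 1).natAbs - lsInvEntry n (d - 1).natAbs =
      if d = 0 then 1 else 0 := by
  rcases lt_trichotomy d 0 with hneg | rfl | hpos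
  · obtain ⟨k, hk⟩ : ∃ k, d.natAbs = k + 1 := ⟨d.natAbs - 1, by omega⟩
    have hrec := lsInvEntry_add_two (n := n) (k := k) (by omega)
    rw [hk, show (d + 1).natAbs = k by omega, show (d - 1).natAbs = k + 2 by omega, if_neg hneg.ne]
    linarith
  · have := four_mul_lsInvEntry_zero_sub (n := n) (by omega)
    simp only [Int.natAbs_zero, zero_add, zero_sub, Int.natAbs_neg, Int.natAbs_one, if_true]
    linarith
  · obtain ⟨k, hk⟩ : ∃ k, d.natAbs = k + 1 := ⟨d.natAbs - 1, by omega⟩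
    have hrec := lsInvEntry_add_two (n := n) (k := k) (by omega)
    rw [hk, show (d + 1).natAbs = k + 2 by omega, show (d - 1).natAbs = k by omega, if_neg hpos.ne']
    linarith

end lsInvEntry

noncomputable def lsInv (n : ℕ) : Matrix (Fin n) (Fin n) ℝ :=
  Matrix.of fun i j => lsInvEntry n ((i : ℤ) - j).natAbs

theorem LS_mul_lsInv {n : ℕ} (hn : 3 ≤ n) : LS n * lsInv n = 1 := by
  ext i j
  have htop : lsInvEntry n ((n : ℤ) - j).natAbs = -lsInvEntry n ((0 : ℤ) - j).natAbs := by
    rw [show ((n : ℤ) - j).natAbs = n - j by omega, show ((0 : ℤ) - j).natAbs = j by omega,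
      lsInvEntry_sub j.isLt.le]
  have hbot : lsInvEntry n ((-1 : ℤ) - j).natAbs = -lsInvEntry n ((n : ℤ) - 1 - j).natAbs := by
    rw [show ((-1 : ℤ) - j).natAbs = j + 1 by omega,
      show ((n : ℤ) - 1 - j).natAbs = n - (j + 1) by omega, lsInvEntry_sub (by omega), neg_neg]
  have hcol := LS_mulVec_apply hn (fun k => lsInvEntry n (k - j).natAbs) htop hbot i
  calc (LS n * lsInv n) i j
      = 4 * lsInvEntry n ((i : ℤ) - j).natAbs - lsInvEntry n ((i : ℤ) - j + 1).natAbs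
          - lsInvEntry n ((i : ℤ) - j - 1).natAbs := by
        rw [sub_add_eq_add_sub, sub_right_comm (i : ℤ) j 1, ← hcol]
        rfl
    _ = (1 : Matrix (Fin n) (Fin n) ℝ) i j := by
        rw [lsInvEntry_second_diff _ (by omega), Matrix.one_apply]
        simp only [sub_eq_zero, Nat.cast_inj, Fin.val_inj]

theorem trace_lsInv (n : ℕ) :
    (lsInv n).trace = n * (lucasU n / ((2 + √3) ^ n + (2 - √3) ^ n + 2)) := by
  simp [Matrix.trace, lsInv, lsInvEntry, lucasU_zero]

theorem stmt4 (n : ℕ) (hn : 3 ≤ n) (hL : (LS n).IsHermitian) :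
    (∀ i, 0 < hL.eigenvalues i) ∧
      ∑ i, (hL.eigenvalues i)⁻¹ =
        n / (2 * Real.sqrt 3) *
          (((2 + Real.sqrt 3) ^ n - (2 - Real.sqrt 3) ^ n) /
            ((2 + Real.sqrt 3) ^ n + (2 - Real.sqrt 3) ^ n + 2)) := by
  have hinv := LS_mul_lsInv hn
  refine ⟨fun i => two_pos.trans_le (two_le_eigenvalues_LS hn hL i), ?_⟩
  have htrace := hL.trace_inv (IsUnit.of_mul_eq_one _ hinv)
  rw [Matrix.inv_eq_right_inv hinv, trace_lsInv] at htrace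
  simp only [RCLike.ofReal_real_eq_id, id] at htrace
  rw [← htrace, lucasU]
  ring
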